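/- arXiv:1803.09936 — 3 statements merged into one kernel-verified Lean document; each statement's English description precedes it below -/
import Mathlib

section
/- Let d ≥ 3 and suppose g satisfies (M1). If 0 < N < N*, then for every λ > 0 one has e_λ(N) ≤ λN. -/
open MeasureTheory Filter Topology NNReal ENNReal

noncomputable section

abbrev Ed (d : ℕ) := EuclideanSpace ℝ (Fin d)

/-- Membership in H¹(ℝᵈ): u and its gradient are in L². -/
def InH1 (d : ℕ) (u : Ed d → ℝ) : Prop :=
  MemLp u 2 (volume : Measure (Ed d)) ∧
  MemLp (fun x => fderiv ℝ u x) 2 (volume : Measure (Ed d))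

/-- ∫ |∇u|² -/
def gradSq (d : ℕ) (u : Ed d → ℝ) : ℝ := ∫ x : Ed d, ‖fderiv ℝ u x‖ ^ 2

/-- ∫ u² -/
def mass (d : ℕ) (u : Ed d → ℝ) : ℝ := ∫ x : Ed d, (u x) ^ 2

/-- ∬ u(x)²u(y)²/|x−y|² -/
def hartree (d : ℕ) (u : Ed d → ℝ) : ℝ :=
  ∫ x : Ed d, ∫ y : Ed d, (u x) ^ 2 * (u y) ^ 2 / ‖x - y‖ ^ 2

/-- Hartree potential ∫ u(y)²/|x−y|² dy -/
def hartreePot (d : ℕ) (u : Ed d → ℝ) (x : Ed d) : ℝ :=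
  ∫ y : Ed d, (u y) ^ 2 / ‖x - y‖ ^ 2

/-- Laplacian as sum of second derivatives along coordinate directions. -/
def lap (d : ℕ) (u : Ed d → ℝ) (x : Ed d) : ℝ :=
  ∑ i : Fin d,
    iteratedFDeriv ℝ 2 u x ![EuclideanSpace.single i (1 : ℝ), EuclideanSpace.single i (1 : ℝ)]

/-- Positive H¹ solution of −Δu + u = (∫ u(y)²/|x−y|² dy) u. -/
def IsSolution (d : ℕ) (u : Ed d → ℝ) : Prop :=
  InH1 d u ∧ (∀ x, 0 < u x) ∧
  ∀ x : Ed d, -lap d u x + u x = hartreePot d u x * u x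

/-- Energy functional I of the limit Hartree equation. -/
def Ifun (d : ℕ) (u : Ed d → ℝ) : ℝ :=
  (1 / 2) * (gradSq d u + mass d u) - (1 / 4) * hartree d u

/-- Ground state: positive solution minimizing I among positive solutions. -/
def IsGroundState (d : ℕ) (Q : Ed d → ℝ) : Prop :=
  IsSolution d Q ∧ ∀ v, IsSolution d v → Ifun d Q ≤ Ifun d v

/-- Assumption (M₁). -/
def M1 (d : ℕ) (g : Ed d → ℝ) : Prop :=
  (∃ α : ℝ≥0, 0 < α ∧ α < 1 ∧ ∀ K : Set (Ed d), IsCompact K →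
    ∃ C : ℝ≥0, HolderOnWith C α g K) ∧
  g 0 = 0 ∧ (∀ x, 0 ≤ g x) ∧ (∀ x, g x ≤ 1) ∧
  (∀ x, x ≠ 0 → 0 < g x) ∧
  MemLp (fun x => 1 - g x) ((d : ℝ≥0∞) / 2) (volume : Measure (Ed d))

/-- Hartree energy functional E_λ with steep potential λg. -/
def Efun (d : ℕ) (g : Ed d → ℝ) (lam : ℝ) (u : Ed d → ℝ) : ℝ :=
  gradSq d u + lam * (∫ x : Ed d, g x * (u x) ^ 2) - (1 / 2) * hartree d u

/-- e_λ(N): infimum of E_λ over the mass-N sphere of H¹. -/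
def elam (d : ℕ) (g : Ed d → ℝ) (lam N : ℝ) : ℝ :=
  sInf (Efun d g lam '' {u | InH1 d u ∧ mass d u = N})

/-- Positive minimizer of e_λ(N). -/
def IsPosMinimizer (d : ℕ) (g : Ed d → ℝ) (lam N : ℝ) (u : Ed d → ℝ) : Prop :=
  InH1 d u ∧ mass d u = N ∧ (∀ x, 0 < u x) ∧ Efun d g lam u = elam d g lam N

/-- λ*(N). -/
def lamStar (d : ℕ) (g : Ed d → ℝ) (N : ℝ) : ℝ :=
  sInf ((fun u : Ed d → ℝ =>
      (gradSq d u - (1 / 2) * hartree d u) / ∫ x : Ed d, (1 - g x) * (u x) ^ 2) ''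
    {u | InH1 d u ∧ mass d u = N})

/-- Assumption (M₂): g(x) = |x|^p (1 + o(1)) as x → 0. -/
def M2 (d : ℕ) (g : Ed d → ℝ) (p : ℝ) : Prop :=
  Tendsto (fun x : Ed d => g x / ‖x‖ ^ p) (𝓝[≠] (0 : Ed d)) (𝓝 1)

/-- Membership in 𝓗 = {u ∈ H¹ : ∫ |x|^p u² < ∞}. -/
def InHp (d : ℕ) (p : ℝ) (u : Ed d → ℝ) : Prop :=
  InH1 d u ∧ Integrable (fun x : Ed d => ‖x‖ ^ p * (u x) ^ 2) volume

/-- Limit energy functional E_∞. -/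
def Einf (d : ℕ) (p : ℝ) (u : Ed d → ℝ) : ℝ :=
  gradSq d u + (∫ x : Ed d, ‖x‖ ^ p * (u x) ^ 2) - (1 / 2) * hartree d u

/-- e_∞(N). -/
def einf (d : ℕ) (p : ℝ) (N : ℝ) : ℝ :=
  sInf (Einf d p '' {u | InHp d p u ∧ mass d u = N})

/-- Positive minimizer of e_∞(N). -/
def IsPosMinimizerInf (d : ℕ) (p N : ℝ) (u : Ed d → ℝ) : Prop :=
  InHp d p u ∧ mass d u = N ∧ (∀ x, 0 < u x) ∧ Einf d p u = einf d p N


section Aux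

open Metric Function

lemma M1.continuous_g {d : ℕ} {g : Ed d → ℝ} (hg : M1 d g) : Continuous g := by
  obtain ⟨⟨α, hα0, _, hK⟩, -⟩ := hg
  rw [continuous_iff_continuousAt]
  intro x
  obtain ⟨C, hC⟩ := hK (closedBall x 1) (isCompact_closedBall x 1)
  exact (hC.continuousOn hα0).continuousAt (closedBall_mem_nhds x one_pos)

lemma exists_test (d : ℕ) (N ε : ℝ) (hN : 0 < N) (hε : 0 < ε) :
    ∃ u : Ed d → ℝ, InH1 d u ∧ mass d u = N ∧ Continuous u ∧ HasCompactSupport u ∧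
      gradSq d u ≤ ε := by
  classical
  let f : ContDiffBump (0 : Ed d) := ⟨1, 2, one_pos, one_lt_two⟩
  have hfc : Continuous f := f.continuous
  have hfs : HasCompactSupport (⇑f) := f.hasCompactSupport
  set M : ℝ := ∫ x : Ed d, f x ^ 2 with hM_def
  set G : ℝ := ∫ x : Ed d, ‖fderiv ℝ (⇑f) x‖ ^ 2 with hG_def
  have hM : 0 < M := by
    rw [hM_def, integral_pos_iff_support_of_nonneg (fun x => sq_nonneg _)
      ((hfc.pow 2).integrable_of_hasCompactSupport hfs.mul_left)]
    have : support (fun x : Ed d => f x ^ 2) = support (⇑f) := by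
      ext x; simp [pow_eq_zero_iff]
    rw [this, f.support_eq]
    exact measure_ball_pos _ _ two_pos
  have hG : 0 ≤ G := integral_nonneg fun x => sq_nonneg _
  set R : ℝ := max 1 (Real.sqrt (N * G / (M * ε))) with hR_def
  have hR : 0 < R := lt_of_lt_of_le one_pos (le_max_left _ _)
  have hR2 : N * G / (M * ε) ≤ R ^ 2 := by
    calc N * G / (M * ε) = Real.sqrt (N * G / (M * ε)) ^ 2 :=
          (Real.sq_sqrt (by positivity)).symm
      _ ≤ R ^ 2 := pow_le_pow_left₀ (Real.sqrt_nonneg _) (le_max_right _ _) 2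
  set a : ℝ := Real.sqrt (N / (R ^ d * M)) with ha_def
  have ha2 : a ^ 2 = N / (R ^ d * M) := Real.sq_sqrt (by positivity)
  set u : Ed d → ℝ := fun x => a * f (R⁻¹ • x) with hu_def
  have hsc : ContDiff ℝ 1 (fun x : Ed d => R⁻¹ • x) := contDiff_id.const_smul R⁻¹
  have hf1 : ContDiff ℝ 1 (⇑f) := f.contDiff
  have hu_cd : ContDiff ℝ 1 u := contDiff_const.mul (hf1.comp hsc)
  have hu_cont : Continuous u := hu_cd.continuous
  have hu_supp : HasCompactSupport u := by
    have h1 : HasCompactSupport (fun x : Ed d => f (R⁻¹ • x)) := by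
      have := hfs.comp_homeomorph (Homeomorph.smul (Units.mk0 R⁻¹ (inv_ne_zero hR.ne')))
      convert this using 1
      rfl
    exact h1.mul_left
  -- mass computation
  have hmass : mass d u = N := by
    have h1 : mass d u = a ^ 2 * ∫ x : Ed d, (fun y : Ed d => f y ^ 2) (R⁻¹ • x) := by
      rw [mass, ← integral_const_mul]
      congr 1 with x
      simp [hu_def, mul_pow]
    rw [h1, Measure.integral_comp_inv_smul_of_nonneg volume (fun y : Ed d => f y ^ 2) hR.le,
      finrank_euclideanSpace_fin, smul_eq_mul, ha2]
    field_simp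
    exact hM_def.symm
  -- fderiv computation
  have hfd : ∀ x : Ed d, fderiv ℝ u x = (a * R⁻¹) • fderiv ℝ (⇑f) (R⁻¹ • x) := by
    intro x
    have h2 : HasFDerivAt (fun x : Ed d => R⁻¹ • x)
        (R⁻¹ • ContinuousLinearMap.id ℝ (Ed d)) x := (hasFDerivAt_id x).const_smul R⁻¹
    have h1 : HasFDerivAt (⇑f) (fderiv ℝ (⇑f) (R⁻¹ • x)) (R⁻¹ • x) :=
      (hf1.differentiable one_ne_zero (R⁻¹ • x)).hasFDerivAt
    have h3 : HasFDerivAt u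
        (a • (fderiv ℝ (⇑f) (R⁻¹ • x)).comp (R⁻¹ • ContinuousLinearMap.id ℝ (Ed d))) x :=
      (h1.comp x h2).const_mul a
    rw [h3.fderiv, ContinuousLinearMap.comp_smul, ContinuousLinearMap.comp_id, smul_smul]
  -- gradient square computation
  have hgs : gradSq d u = N * G / (M * R ^ 2) := by
    have h1 : gradSq d u
        = (a * R⁻¹) ^ 2 * ∫ x : Ed d, (fun y : Ed d => ‖fderiv ℝ (⇑f) y‖ ^ 2) (R⁻¹ • x) := by
      rw [gradSq, ← integral_const_mul]
      congr 1 with x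
      rw [hfd x, norm_smul, Real.norm_eq_abs,
        abs_of_nonneg (by positivity : (0:ℝ) ≤ a * R⁻¹), mul_pow]
    rw [h1, Measure.integral_comp_inv_smul_of_nonneg volume
      (fun y : Ed d => ‖fderiv ℝ (⇑f) y‖ ^ 2) hR.le, finrank_euclideanSpace_fin,
      smul_eq_mul, mul_pow, ha2]
    field_simp
    ring
  have hgsle : gradSq d u ≤ ε := by
    rw [hgs]
    rw [div_le_iff₀ (by positivity)] at hR2 ⊢
    nlinarith [hM, hR, hε, hG, hN]
  refine ⟨u, ⟨hu_cont.memLp_of_hasCompactSupport hu_supp,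
    (hu_cd.continuous_fderiv one_ne_zero).memLp_of_hasCompactSupport (hu_supp.fderiv (𝕜 := ℝ))⟩,
    hmass, hu_cont, hu_supp, hgsle⟩

end Aux


/-- if 0 < N < N*, then e_λ(N) ≤ λN for every λ > 0. -/
theorem stmt9 (d : ℕ) (hd : 3 ≤ d) (g : Ed d → ℝ) (hg : M1 d g)
    (Q : Ed d → ℝ) (hQ : IsGroundState d Q)
    (N : ℝ) (hN0 : 0 < N) (hN : N < mass d Q)
    (lam : ℝ) (hlam : 0 < lam) :
    elam d g lam N ≤ lam * N := by
  have hgc : Continuous g := hg.continuous_g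
  obtain ⟨-, -, hg0, hg1, -, -⟩ := hg
  have key : ∀ ε > 0, ∃ u, (InH1 d u ∧ mass d u = N) ∧ Efun d g lam u ≤ lam * N + ε := by
    intro ε hε
    obtain ⟨u, h1, h2, hc, hs, hgrad⟩ := exists_test d N ε hN0 hε
    refine ⟨u, ⟨h1, h2⟩, ?_⟩
    have hint_u2 : Integrable (fun x => u x ^ 2) (volume : Measure (Ed d)) :=
      (hc.pow 2).integrable_of_hasCompactSupport hs.mul_left
    have hint_g : Integrable (fun x => g x * u x ^ 2) (volume : Measure (Ed d)) :=
      (hgc.mul (hc.pow 2)).integrable_of_hasCompactSupport hs.mul_left.mul_left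
    have hgle : (∫ x : Ed d, g x * u x ^ 2) ≤ N := by
      calc (∫ x : Ed d, g x * u x ^ 2) ≤ ∫ x : Ed d, u x ^ 2 :=
            integral_mono hint_g hint_u2 fun x =>
              mul_le_of_le_one_left (sq_nonneg _) (hg1 x)
        _ = N := h2
    have hh : 0 ≤ hartree d u :=
      integral_nonneg fun x => integral_nonneg fun y => by positivity
    have hlg : lam * (∫ x : Ed d, g x * u x ^ 2) ≤ lam * N :=
      mul_le_mul_of_nonneg_left hgle hlam.le
    rw [Efun]
    linarith
  by_cases hbdd : BddBelow (Efun d g lam '' {u | InH1 d u ∧ mass d u = N})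
  · refine le_of_forall_pos_le_add fun ε hε => ?_
    obtain ⟨u, hu, hle⟩ := key ε hε
    exact le_trans (csInf_le hbdd ⟨u, hu, rfl⟩) hle
  · rw [elam, Real.sInf_of_not_bddBelow hbdd]
    positivity
end
end

section
/- Let d ≥ 3 and p > 0. There exists a constant C(p) > 0 depending only on p such that e_∞(N)/N ≤ C(p) for every N ∈ (0, N*). -/
open MeasureTheory Filter Topology NNReal ENNReal

noncomputable section

lemma hartree_nonneg (d : ℕ) (u : Ed d → ℝ) : 0 ≤ hartree d u :=
  integral_nonneg fun x => integral_nonneg fun y => by positivity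


/-- e_∞(N)/N ≤ C(p) for all N ∈ (0, N*). -/
theorem stmt12 (d : ℕ) (hd : 3 ≤ d) (p : ℝ) (hp : 0 < p)
    (Q : Ed d → ℝ) (hQ : IsGroundState d Q) :
    ∃ C : ℝ, 0 < C ∧ ∀ N : ℝ, 0 < N → N < mass d Q → einf d p N / N ≤ C := by
  classical
  let φ : ContDiffBump (0 : Ed d) := ⟨1, 2, one_pos, one_lt_two⟩
  set u₀ : Ed d → ℝ := fun x => φ x with hu₀def
  have hcont : Continuous u₀ := φ.continuous
  have hcs : HasCompactSupport u₀ := φ.hasCompactSupport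
  have hsm : ContDiff ℝ 1 u₀ := φ.contDiff
  have hcontsq : Continuous (fun x => u₀ x ^ 2) := hcont.pow 2
  have hcssq : HasCompactSupport (fun x => u₀ x ^ 2) :=
    hcs.comp_left (g := fun t : ℝ => t ^ 2) (by norm_num)
  have hMint : Integrable (fun x : Ed d => u₀ x ^ 2) volume :=
    hcontsq.integrable_of_hasCompactSupport hcssq
  set M : ℝ := mass d u₀ with hMdef
  have hMpos : 0 < M := by
    rw [hMdef, mass, integral_pos_iff_support_of_nonneg (fun x => sq_nonneg _) hMint]
    have hsupp : Function.support (fun x : Ed d => u₀ x ^ 2) = Metric.ball (0 : Ed d) 2 := by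
      rw [← φ.support_eq]
      ext x
      simp [Function.mem_support, pow_eq_zero_iff]
      exact Iff.rfl
    rw [hsupp]
    exact Metric.measure_ball_pos _ _ two_pos
  set w : Ed d → ℝ := fun x => ‖x‖ ^ p * u₀ x ^ 2 with hwdef
  have hwcont : Continuous w :=
    (continuous_norm.rpow_const fun x => Or.inr hp.le).mul hcontsq
  have hwcs : HasCompactSupport w := by
    apply hcssq.mono
    intro x hx
    simp only [Function.mem_support, hwdef] at hx ⊢
    intro h0
    exact hx (by rw [h0, mul_zero])
  have hwint : Integrable w volume := hwcont.integrable_of_hasCompactSupport hwcs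
  set P : ℝ := ∫ x : Ed d, w x with hPdef
  have hPnn : 0 ≤ P := integral_nonneg fun x => by
    exact mul_nonneg (Real.rpow_nonneg (norm_nonneg _) p) (sq_nonneg _)
  set G : ℝ := gradSq d u₀ with hGdef
  have hGnn : 0 ≤ G := integral_nonneg fun x => sq_nonneg _
  have h2 : MemLp u₀ 2 (volume : Measure (Ed d)) :=
    hcont.memLp_of_hasCompactSupport hcs
  have hfdcont : Continuous (fderiv ℝ u₀) := hsm.continuous_fderiv one_ne_zero
  have hfdcs : HasCompactSupport (fderiv ℝ u₀) := HasCompactSupport.fderiv (𝕜 := ℝ) hcs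
  have h2' : MemLp (fun x => fderiv ℝ u₀ x) 2 (volume : Measure (Ed d)) :=
    hfdcont.memLp_of_hasCompactSupport hfdcs
  refine ⟨max 1 ((G + P) / M), lt_of_lt_of_le one_pos (le_max_left _ _), ?_⟩
  intro N hN _
  set S := Einf d p '' {u | InHp d p u ∧ mass d u = N} with hSdef
  by_cases hbdd : BddBelow S
  · set c : ℝ := Real.sqrt (N / M) with hcdef
    have hc2 : c ^ 2 = N / M := Real.sq_sqrt (by positivity)
    set u : Ed d → ℝ := fun x => c * u₀ x with hudef
    have hfderiv : ∀ x, fderiv ℝ u x = c • fderiv ℝ u₀ x := fun x =>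
      fderiv_const_mul (hsm.differentiable one_ne_zero x) c
    have hmassu : mass d u = N := by
      have : (fun x : Ed d => (u x) ^ 2) = fun x => c ^ 2 * u₀ x ^ 2 := by
        funext x; simp [hudef]; ring
      rw [mass, this, integral_const_mul, hc2]
      exact div_mul_cancel₀ N hMpos.ne'
    have hgradu : gradSq d u = c ^ 2 * G := by
      have : (fun x : Ed d => ‖fderiv ℝ u x‖ ^ 2) = fun x => c ^ 2 * ‖fderiv ℝ u₀ x‖ ^ 2 := by
        funext x
        rw [hfderiv x, norm_smul, mul_pow, Real.norm_eq_abs, sq_abs]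
      rw [gradSq, this, integral_const_mul]
      rfl
    have hpotu : (∫ x : Ed d, ‖x‖ ^ p * (u x) ^ 2) = c ^ 2 * P := by
      have : (fun x : Ed d => ‖x‖ ^ p * (u x) ^ 2) = fun x => c ^ 2 * w x := by
        funext x; simp only [hudef, hwdef]; ring
      rw [this, integral_const_mul]
    have hmem : Einf d p u ∈ S := by
      refine ⟨u, ⟨⟨⟨h2.const_mul c, ?_⟩, ?_⟩, hmassu⟩, rfl⟩
      · have : (fun x => fderiv ℝ u x) = fun x => c • fderiv ℝ u₀ x := funext hfderiv
        rw [this]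
        exact h2'.const_smul c
      · have : (fun x : Ed d => ‖x‖ ^ p * (u x) ^ 2) = fun x => c ^ 2 * w x := by
          funext x; simp only [hudef, hwdef]; ring
        rw [this]
        exact hwint.const_mul _
    have hEle : Einf d p u ≤ N * ((G + P) / M) := by
      have h1 : Einf d p u ≤ c ^ 2 * (G + P) := by
        rw [Einf, hgradu, hpotu]
        have := hartree_nonneg d u
        nlinarith
      calc Einf d p u ≤ c ^ 2 * (G + P) := h1
        _ = N * ((G + P) / M) := by rw [hc2]; field_simp
    have hsle : einf d p N ≤ N * ((G + P) / M) :=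
      le_trans (csInf_le hbdd hmem) hEle
    rw [div_le_iff₀ hN]
    calc einf d p N ≤ N * ((G + P) / M) := hsle
      _ ≤ max 1 ((G + P) / M) * N := by
          rw [mul_comm]
          exact mul_le_mul_of_nonneg_right (le_max_right _ _) hN.le
  · rw [einf, ← hSdef, Real.sInf_of_not_bddBelow hbdd, zero_div]
    exact le_trans zero_le_one (le_max_left _ _)
end
end

section
/- Let d ≥ 3, suppose g satisfies (M1) and (M2) for some p > 0, and let N ∈ (0, N*). For each λ > λ*(N) let u_λ be a positive minimizer of e_λ(N) and let μ_λ := N^{−1}[e_λ(N) − (1/2)∬_{ℝ^d×ℝ^d} u_λ(x)²u_λ(y)²/|x−y|² dx dy] be the associated Lagrange multiplier. Then there exists a constant C(p) > 0 depending only on p such that μ_λ ≤ C(p) λ^{2/(2+p)} for all sufficiently large λ. -/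
open MeasureTheory Filter Topology NNReal ENNReal

noncomputable section

/-! Auxiliary lemmas for stmt16. -/

lemma aux_global_bound (d : ℕ) (g : Ed d → ℝ) (p : ℝ) (hp : 0 < p)
    (hg0 : g 0 = 0) (hgle : ∀ x, g x ≤ 1)
    (h2 : Tendsto (fun x : Ed d => g x / ‖x‖ ^ p) (𝓝[≠] (0 : Ed d)) (𝓝 1)) :
    ∃ K : ℝ, 0 < K ∧ ∀ x : Ed d, g x ≤ K * ‖x‖ ^ p := by
  have h3 : ∀ᶠ x : Ed d in 𝓝[≠] 0, g x / ‖x‖ ^ p < 2 :=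
    h2.eventually (Filter.Tendsto.eventually_lt_const (by norm_num) tendsto_id)
  rw [Filter.Eventually, Metric.mem_nhdsWithin_iff] at h3
  obtain ⟨δ, hδ, hball'⟩ := h3
  have hball : ∀ x : Ed d, dist x 0 < δ → x ≠ 0 → g x / ‖x‖ ^ p < 2 :=
    fun x h1 h2 => hball' ⟨Metric.mem_ball.2 h1, h2⟩
  refine ⟨2 + (δ⁻¹) ^ p, by positivity, fun x => ?_⟩
  rcases eq_or_ne x 0 with rfl | hx0
  · simp [hg0]
    positivity
  rcases lt_or_ge (dist x 0) δ with hlt | hge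
  · have := hball x hlt hx0
    have hxp : (0:ℝ) < ‖x‖ ^ p := Real.rpow_pos_of_pos (norm_pos_iff.2 hx0) p
    have : g x < 2 * ‖x‖ ^ p := by
      rwa [div_lt_iff₀ hxp] at this
    nlinarith [Real.rpow_nonneg (norm_nonneg x) p,
      Real.rpow_nonneg (inv_nonneg.2 hδ.le) p]
  · have hxd : δ ≤ ‖x‖ := by simpa [dist_eq_norm] using hge
    have h1 : (1:ℝ) ≤ (δ⁻¹) ^ p * ‖x‖ ^ p := by
      rw [← Real.mul_rpow (inv_nonneg.2 hδ.le) (norm_nonneg x)]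
      refine Real.one_le_rpow ?_ hp.le
      rw [inv_mul_eq_div, le_div_iff₀ hδ]
      simpa using hxd
    have := hgle x
    nlinarith [Real.rpow_nonneg (norm_nonneg x) p]

lemma aux_hartree_nonneg (d : ℕ) (v : Ed d → ℝ) : 0 ≤ hartree d v := by
  refine integral_nonneg fun x => integral_nonneg fun y => ?_
  positivity

set_option maxHeartbeats 1000000 in
/-- upper bound on the Lagrange multiplier μ_λ. -/
theorem stmt16 (d : ℕ) (hd : 3 ≤ d) (g : Ed d → ℝ) (p : ℝ) (hp : 0 < p)
    (hg1 : M1 d g) (hg2 : M2 d g p)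
    (Q : Ed d → ℝ) (hQ : IsGroundState d Q)
    (N : ℝ) (hN0 : 0 < N) (hN : N < mass d Q)
    (u : ℝ → Ed d → ℝ)
    (hu : ∀ lam : ℝ, lamStar d g N < lam → IsPosMinimizer d g lam N (u lam)) :
    ∃ C : ℝ, 0 < C ∧ ∃ lam0 : ℝ, ∀ lam : ℝ, lam0 ≤ lam →
      (1 / N) * (elam d g lam N - (1 / 2) * hartree d (u lam))
        ≤ C * lam ^ ((2 : ℝ) / (2 + p)) := by
  classical
  obtain ⟨-, hg0, hgnn, hgle, -, -⟩ := hg1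
  obtain ⟨K, hK, hgK⟩ := aux_global_bound d g p hp hg0 hgle hg2
  -- the bump function
  set φ : ContDiffBump (0 : Ed d) := ⟨1, 2, one_pos, one_lt_two⟩ with hφdef
  have hφc : Continuous (⇑φ) := φ.continuous
  have hφcs : HasCompactSupport (⇑φ) := φ.hasCompactSupport
  have hφ2c : Continuous (fun x : Ed d => φ x ^ 2) := hφc.pow 2
  have hφ2cs : HasCompactSupport (fun x : Ed d => φ x ^ 2) :=
    hφcs.comp_left (g := fun y : ℝ => y ^ 2) (by norm_num)
  have hDc : Continuous (fun x => fderiv ℝ (⇑φ) x) :=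
    ContDiff.continuous_fderiv (φ.contDiff (n := ⊤)) (by norm_num)
  have hDcs : HasCompactSupport (fun x => fderiv ℝ (⇑φ) x) :=
    HasCompactSupport.fderiv (𝕜 := ℝ) hφcs
  have hD2c : Continuous (fun x : Ed d => ‖fderiv ℝ (⇑φ) x‖ ^ 2) := (hDc.norm).pow 2
  have hD2cs : HasCompactSupport (fun x : Ed d => ‖fderiv ℝ (⇑φ) x‖ ^ 2) :=
    (hDcs.norm).comp_left (g := fun y : ℝ => y ^ 2) (by norm_num)
  have hnpc : Continuous (fun x : Ed d => ‖x‖ ^ p) :=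
    continuous_norm.rpow_const (fun x => Or.inr hp.le)
  have hFc : Continuous (fun x : Ed d => ‖x‖ ^ p * φ x ^ 2) := hnpc.mul hφ2c
  have hFcs : HasCompactSupport (fun x : Ed d => ‖x‖ ^ p * φ x ^ 2) :=
    HasCompactSupport.mul_left hφ2cs
  -- constants
  set mφ : ℝ := ∫ x : Ed d, φ x ^ 2 with hmφdef
  set gφ : ℝ := ∫ x : Ed d, ‖fderiv ℝ (⇑φ) x‖ ^ 2 with hgφdef
  set pφ : ℝ := ∫ x : Ed d, ‖x‖ ^ p * φ x ^ 2 with hpφdef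
  have hgφ0 : 0 ≤ gφ := integral_nonneg fun x => by positivity
  have hpφ0 : 0 ≤ pφ := integral_nonneg fun x => by positivity
  have hmφ : 0 < mφ := by
    have hint : Integrable (fun x : Ed d => φ x ^ 2) :=
      hφ2c.integrable_of_hasCompactSupport hφ2cs
    have h1 : (volume (Metric.closedBall (0 : Ed d) φ.rIn)).toReal ≤ mφ := by
      have heq : ∫ x in Metric.closedBall (0 : Ed d) φ.rIn, φ x ^ 2
          = (volume (Metric.closedBall (0 : Ed d) φ.rIn)).toReal := by
        rw [setIntegral_congr_fun (measurableSet_closedBall) (g := fun _ => (1:ℝ))]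
        · simp; rfl
        · intro x hx; simp [φ.one_of_mem_closedBall hx]
      calc (volume (Metric.closedBall (0 : Ed d) φ.rIn)).toReal
          = ∫ x in Metric.closedBall (0 : Ed d) φ.rIn, φ x ^ 2 := heq.symm
        _ ≤ mφ := setIntegral_le_integral hint
            (Filter.Eventually.of_forall fun x => sq_nonneg _)
    refine lt_of_lt_of_le ?_ h1
    have := Metric.measure_closedBall_pos (volume : Measure (Ed d)) 0 φ.rIn_pos
    exact ENNReal.toReal_pos this.ne' (MeasureTheory.measure_closedBall_lt_top).ne
  set C1 : ℝ := N / mφ * gφ with hC1def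
  set C2 : ℝ := K * (N / mφ) * pφ with hC2def
  have hC1 : 0 ≤ C1 := mul_nonneg (div_nonneg hN0.le hmφ.le) hgφ0
  have hC2 : 0 ≤ C2 := mul_nonneg (mul_nonneg hK.le (div_nonneg hN0.le hmφ.le)) hpφ0
  refine ⟨(C1 + C2) / N + 1, by positivity, 1, fun lam hlam => ?_⟩
  have hlam0 : (0:ℝ) < lam := lt_of_lt_of_le one_pos hlam
  have h2p : (0:ℝ) < 2 + p := by linarith
  -- the scaling
  set s : ℝ := lam ^ (-(1:ℝ)/(2+p)) with hsdef
  have hs : 0 < s := Real.rpow_pos_of_pos hlam0 _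
  have hsd : (0:ℝ) < s ^ d := pow_pos hs d
  set a : ℝ := Real.sqrt (N / (s ^ d * mφ)) with hadef
  have ha2 : a ^ 2 = N / (s ^ d * mφ) :=
    Real.sq_sqrt (le_of_lt (by positivity))
  set w : Ed d → ℝ := fun x => a * φ (s⁻¹ • x) with hwdef
  -- change of variables helper
  have hcov : ∀ F : Ed d → ℝ, ∫ x : Ed d, F (s⁻¹ • x) = s ^ d * ∫ x : Ed d, F x := by
    intro F
    rw [Measure.integral_comp_inv_smul_of_nonneg (volume : Measure (Ed d)) F hs.le,
      finrank_euclideanSpace_fin, smul_eq_mul]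
  have hsm : IsClosedEmbedding (fun x : Ed d => s⁻¹ • x) :=
    (Homeomorph.smulOfNeZero s⁻¹ (inv_ne_zero hs.ne')).isClosedEmbedding
  -- mass of w
  have hmass : mass d w = N := by
    have : mass d w = ∫ x : Ed d, a ^ 2 * ((fun y : Ed d => φ y ^ 2) (s⁻¹ • x)) := by
      unfold w
      unfold mass
      congr 1; ext x; ring
    rw [this, integral_const_mul, hcov (fun y : Ed d => φ y ^ 2), ha2]
    field_simp; rfl
  -- fderiv of w
  have hder : ∀ x : Ed d, fderiv ℝ w x = (a * s⁻¹) • fderiv ℝ (⇑φ) (s⁻¹ • x) := by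
    intro x
    have hinner : HasFDerivAt (fun x : Ed d => s⁻¹ • x)
        (s⁻¹ • ContinuousLinearMap.id ℝ (Ed d)) x := (hasFDerivAt_id x).const_smul s⁻¹
    have hφd : HasFDerivAt (⇑φ) (fderiv ℝ (⇑φ) (s⁻¹ • x)) (s⁻¹ • x) :=
      ((φ.contDiff (n := 1)).differentiable (by simp)).differentiableAt.hasFDerivAt
    have hcomp := (hφd.comp x hinner).const_mul a
    have hceq : (fderiv ℝ (⇑φ) (s⁻¹ • x)).comp (s⁻¹ • ContinuousLinearMap.id ℝ (Ed d))
        = s⁻¹ • fderiv ℝ (⇑φ) (s⁻¹ • x) := by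
      ext v; simp
    rw [show w = (fun y : Ed d => a * (⇑φ ∘ (s⁻¹ • ·)) y) from rfl, hcomp.fderiv, hceq,
      smul_smul]
  -- InH1 of w
  have hwc : Continuous w := continuous_const.mul (hφc.comp (continuous_const_smul s⁻¹))
  have hwcs : HasCompactSupport w := by
    have h1 : HasCompactSupport (fun x : Ed d => φ (s⁻¹ • x)) :=
      hφcs.comp_isClosedEmbedding hsm
    exact h1.mul_left
  have hInH1 : InH1 d w := by
    constructor
    · exact hwc.memLp_of_hasCompactSupport hwcs
    · have heq : (fun x => fderiv ℝ w x)
          = fun x : Ed d => (a * s⁻¹) • fderiv ℝ (⇑φ) (s⁻¹ • x) := funext hder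
      rw [heq]
      have hc : Continuous (fun x : Ed d => (a * s⁻¹) • fderiv ℝ (⇑φ) (s⁻¹ • x)) :=
        by have h := (hDc.comp (continuous_const_smul s⁻¹)).const_smul (a * s⁻¹); exact h
      have hcs : HasCompactSupport (fun x : Ed d => (a * s⁻¹) • fderiv ℝ (⇑φ) (s⁻¹ • x)) :=
        (hDcs.comp_isClosedEmbedding hsm).comp_left (g := fun v : Ed d →L[ℝ] ℝ => (a * s⁻¹) • v) (smul_zero _)
      exact hc.memLp_of_hasCompactSupport hcs
  -- gradSq of w
  have hgrad : gradSq d w = a ^ 2 * s⁻¹ ^ 2 * (s ^ d * gφ) := by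
    have : gradSq d w
        = ∫ x : Ed d, (a ^ 2 * s⁻¹ ^ 2) * ((fun y : Ed d => ‖fderiv ℝ (⇑φ) y‖ ^ 2) (s⁻¹ • x)) := by
      unfold gradSq
      congr 1; ext x
      rw [hder x, norm_smul]
      simp [mul_pow, sq_abs, abs_mul, mul_assoc]
    rw [this, integral_const_mul, hcov (fun y : Ed d => ‖fderiv ℝ (⇑φ) y‖ ^ 2)]
  -- potential term
  have hpot : ∫ x : Ed d, g x * w x ^ 2 ≤ K * a ^ 2 * s ^ p * (s ^ d * pφ) := by
    have heqF : ∀ x : Ed d, K * (‖x‖ ^ p * w x ^ 2)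
        = (K * a ^ 2 * s ^ p) * ((fun y : Ed d => ‖y‖ ^ p * φ y ^ 2) (s⁻¹ • x)) := by
      intro x
      have hx : ‖x‖ ^ p = s ^ p * ‖s⁻¹ • x‖ ^ p := by
        rw [← Real.mul_rpow hs.le (norm_nonneg _), ← norm_smul_of_nonneg hs.le, smul_smul,
          mul_inv_cancel₀ hs.ne', one_smul]
      unfold w
      rw [hx]
      ring
    have hintF : Integrable (fun x : Ed d =>
        (K * a ^ 2 * s ^ p) * ((fun y : Ed d => ‖y‖ ^ p * φ y ^ 2) (s⁻¹ • x))) := by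
      refine Integrable.const_mul ?_ _
      exact (hFc.comp (continuous_const_smul s⁻¹)).integrable_of_hasCompactSupport
        (hFcs.comp_isClosedEmbedding hsm)
    have hmono : ∫ x : Ed d, g x * w x ^ 2 ≤ ∫ x : Ed d, K * (‖x‖ ^ p * w x ^ 2) := by
      refine integral_mono_of_nonneg (Filter.Eventually.of_forall fun x => ?_)
        (by simpa only [heqF] using hintF) (Filter.Eventually.of_forall fun x => ?_)
      · exact mul_nonneg (hgnn x) (sq_nonneg _)
      · have := mul_le_mul_of_nonneg_right (hgK x) (sq_nonneg (w x))
        calc g x * w x ^ 2 ≤ K * ‖x‖ ^ p * w x ^ 2 := this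
          _ = K * (‖x‖ ^ p * w x ^ 2) := by ring
    calc ∫ x : Ed d, g x * w x ^ 2 ≤ ∫ x : Ed d, K * (‖x‖ ^ p * w x ^ 2) := hmono
      _ = ∫ x : Ed d, (K * a ^ 2 * s ^ p) * ((fun y : Ed d => ‖y‖ ^ p * φ y ^ 2) (s⁻¹ • x)) := by
          congr 1; ext x; rw [heqF x]
      _ = (K * a ^ 2 * s ^ p) * (s ^ d * pφ) := by rw [integral_const_mul, hcov (fun y : Ed d => ‖y‖ ^ p * φ y ^ 2)]
      _ = K * a ^ 2 * s ^ p * (s ^ d * pφ) := by ring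
  -- rpow algebra
  have ha2sd : a ^ 2 * s ^ d = N / mφ := by
    rw [ha2]; field_simp
  have hsinv : s⁻¹ = lam ^ ((1:ℝ)/(2+p)) := by
    rw [hsdef, neg_div, Real.rpow_neg hlam0.le, inv_inv]
  have hsinv2 : s⁻¹ ^ 2 = lam ^ ((2:ℝ)/(2+p)) := by
    rw [hsinv, ← Real.rpow_natCast (lam ^ ((1:ℝ)/(2+p))) 2, ← Real.rpow_mul hlam0.le]
    congr 1
    push_cast
    ring
  have hlamsp : lam * s ^ p = lam ^ ((2:ℝ)/(2+p)) := by
    have h1 : s ^ p = lam ^ ((-(1:ℝ)/(2+p)) * p) := (Real.rpow_mul hlam0.le _ p).symm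
    have h2 : lam * lam ^ ((-(1:ℝ)/(2+p)) * p) = lam ^ ((1:ℝ) + (-(1:ℝ)/(2+p)) * p) := by
      rw [Real.rpow_add hlam0, Real.rpow_one]
    rw [h1, h2]
    congr 1
    field_simp
    ring
  have hlame : (0:ℝ) < lam ^ ((2:ℝ)/(2+p)) := Real.rpow_pos_of_pos hlam0 _
  -- energy bound
  have hE : Efun d g lam w ≤ (C1 + C2) * lam ^ ((2:ℝ)/(2+p)) := by
    have hh : 0 ≤ hartree d w := aux_hartree_nonneg d w
    have e1 : gradSq d w = C1 * lam ^ ((2:ℝ)/(2+p)) := by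
      rw [hgrad, ← hsinv2, hC1def]
      have : a ^ 2 * s⁻¹ ^ 2 * (s ^ d * gφ) = (a ^ 2 * s ^ d) * gφ * s⁻¹ ^ 2 := by ring
      rw [this, ha2sd]
    have e2 : lam * ∫ x : Ed d, g x * w x ^ 2 ≤ C2 * lam ^ ((2:ℝ)/(2+p)) := by
      calc lam * ∫ x : Ed d, g x * w x ^ 2
          ≤ lam * (K * a ^ 2 * s ^ p * (s ^ d * pφ)) :=
            mul_le_mul_of_nonneg_left hpot hlam0.le
        _ = K * ((a ^ 2) * s ^ d) * pφ * (lam * s ^ p) := by ring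
        _ = C2 * lam ^ ((2:ℝ)/(2+p)) := by rw [ha2sd, hlamsp, hC2def]
    unfold Efun
    rw [e1]
    have : (1:ℝ)/2 * hartree d w ≥ 0 := by positivity
    linarith
  -- bound on elam
  have helam : elam d g lam N ≤ (C1 + C2) * lam ^ ((2:ℝ)/(2+p)) := by
    unfold elam
    by_cases hbb : BddBelow (Efun d g lam '' {u | InH1 d u ∧ mass d u = N})
    · exact le_trans (csInf_le hbb ⟨w, ⟨hInH1, hmass⟩, rfl⟩) hE
    · rw [Real.sInf_of_not_bddBelow hbb]
      positivity
  -- conclusion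
  have hh : 0 ≤ hartree d (u lam) := aux_hartree_nonneg d (u lam)
  have hstep : (1 / N) * (elam d g lam N - (1 / 2) * hartree d (u lam))
      ≤ (1 / N) * elam d g lam N := by
    apply mul_le_mul_of_nonneg_left _ (by positivity)
    linarith
  calc (1 / N) * (elam d g lam N - (1 / 2) * hartree d (u lam))
      ≤ (1 / N) * elam d g lam N := hstep
    _ ≤ (1 / N) * ((C1 + C2) * lam ^ ((2:ℝ)/(2+p))) :=
        mul_le_mul_of_nonneg_left helam (by positivity)
    _ = ((C1 + C2) / N) * lam ^ ((2:ℝ)/(2+p)) := by ring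
    _ ≤ ((C1 + C2) / N + 1) * lam ^ ((2:ℝ)/(2+p)) := by nlinarith
end
end
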